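/- Let H be a complex Hilbert space and let M : H → H be a bounded linear operator with a decomposition M = M₀ + K, where M₀ is sign-definite (either M₀ or −M₀ is self-adjoint with ⟨φ, M₀φ⟩ ≥ c‖φ‖² for some c > 0 and all φ) and K is compact. If Im⟨φ, Mφ⟩ ≠ 0 for every φ ≠ 0, then M is coercive (there exists c' > 0 with |⟨φ, Mφ⟩| ≥ c'‖φ‖² for all φ), and M is bijective with bounded inverse. -/

import Mathlib

open scoped ComplexInnerProductSpace
open ContinuousLinearMap

/-- A bounded operator `C` on a complex Hilbert space is positive (in the sense of
the paper) if it is self-adjoint and there exists `c > 0` with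
`⟪φ, C φ⟫ ≥ c ‖φ‖²` for all `φ`. -/
def IsPositiveOp {H : Type*} [NormedAddCommGroup H] [InnerProductSpace ℂ H]
    [CompleteSpace H] (C : H →L[ℂ] H) : Prop :=
  IsSelfAdjoint C ∧ ∃ c > (0 : ℝ), ∀ φ : H, c * ‖φ‖ ^ 2 ≤ (⟪φ, C φ⟫).re

/-- `C` is sign-definite if either `C` or `-C` is positive. -/
def IsSignDefiniteOp {H : Type*} [NormedAddCommGroup H] [InnerProductSpace ℂ H]
    [CompleteSpace H] (C : H →L[ℂ] H) : Prop :=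
  IsPositiveOp C ∨ IsPositiveOp (-C)

/-!
If `M = M₀ + K` were not coercive, there would be unit vectors `uₙ` with `⟪uₙ, M uₙ⟫ → 0`.
Along an ultrafilter they converge weakly to some `φ` (Banach–Alaoglu), and the compact `K`
turns this into `K uₙ → K φ` in norm, so `⟪uₙ, M₀ uₙ⟫ → -⟪φ, K φ⟫`. For positive `M₀` this limit
is real with real part at least `c > 0`; hence `φ ≠ 0` and yet `Im ⟪φ, M φ⟫ = 0`. The case of
negative `M₀` follows by passing to `-M`, and a coercive operator is invertible by Lax–Milgram.
-/

open Filter Topology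
open scoped InnerProductSpace

lemma IsCompact.exists_tendsto_of_forall_mem {X ι : Type*} [TopologicalSpace X] {s : Set X}
    (hs : IsCompact s) (U : Ultrafilter ι) {f : ι → X} (hf : ∀ i, f i ∈ s) :
    ∃ x ∈ s, Tendsto f U (𝓝 x) :=
  hs.ultrafilter_le_nhds' (U.map f) (Ultrafilter.mem_map.mpr (univ_mem' hf))

section WeakLimits

variable {𝕜 E F ι : Type*} [RCLike 𝕜] [NormedAddCommGroup E] [InnerProductSpace 𝕜 E]
  [NormedAddCommGroup F] [InnerProductSpace 𝕜 F]

/-- Banach–Alaoglu, transported to `E` by the Riesz representation theorem. -/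
lemma exists_forall_tendsto_inner_of_norm_le [CompleteSpace E] (U : Ultrafilter ι) {u : ι → E}
    {R : ℝ} (hu : ∀ i, ‖u i‖ ≤ R) :
    ∃ φ : E, ∀ y, Tendsto (fun i ↦ ⟪u i, y⟫_𝕜) U (𝓝 ⟪φ, y⟫_𝕜) := by
  let f : ι → WeakDual 𝕜 E := fun i ↦ StrongDual.toWeakDual (InnerProductSpace.toDual 𝕜 E (u i))
  have hf : ∀ i, f i ∈ WeakDual.toStrongDual ⁻¹' Metric.closedBall 0 R := fun i ↦ by
    simpa [f] using hu i
  obtain ⟨F, -, hF⟩ := (WeakDual.isCompact_closedBall 0 R).exists_tendsto_of_forall_mem U hf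
  refine ⟨(InnerProductSpace.toDual 𝕜 E).symm (WeakDual.toStrongDual F), fun y ↦ ?_⟩
  rw [InnerProductSpace.toDual_symm_apply]
  exact tendsto_iff_forall_eval_tendsto_topDualPairing.mp hF y

lemma tendsto_inner_of_forall_tendsto_inner {l : Filter ι} {u v : ι → E} {R : ℝ}
    (hu : ∀ i, ‖u i‖ ≤ R) {φ ψ : E} (hφ : ∀ y, Tendsto (fun i ↦ ⟪u i, y⟫_𝕜) l (𝓝 ⟪φ, y⟫_𝕜))
    (hv : Tendsto v l (𝓝 ψ)) :
    Tendsto (fun i ↦ ⟪u i, v i⟫_𝕜) l (𝓝 ⟪φ, ψ⟫_𝕜) := by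
  have hsmall : Tendsto (fun i ↦ ⟪u i, v i - ψ⟫_𝕜) l (𝓝 0) := by
    refine squeeze_zero_norm (fun i ↦ ?_) (by simpa using ((hv.sub_const ψ).norm.const_mul R))
    exact (norm_inner_le_norm _ _).trans (by gcongr; exact hu i)
  simpa [inner_sub_right] using hsmall.add (hφ ψ)

lemma IsCompactOperator.tendsto_of_forall_tendsto_inner [CompleteSpace E] [CompleteSpace F]
    {K : E →L[𝕜] F} (hK : IsCompactOperator K) {l : Filter ι} {u : ι → E} {R : ℝ}
    (hu : ∀ i, ‖u i‖ ≤ R) {φ : E} (hφ : ∀ y, Tendsto (fun i ↦ ⟪u i, y⟫_𝕜) l (𝓝 ⟪φ, y⟫_𝕜)) :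
    Tendsto (fun i ↦ K (u i)) l (𝓝 (K φ)) := by
  refine tendsto_iff_ultrafilter _ _ _ |>.mpr fun U hU ↦ ?_
  obtain ⟨C, hC, hKC⟩ := hK.image_closedBall_subset_compact (f := (K : E →ₗ[𝕜] F)) R
  obtain ⟨ψ, -, hψ⟩ := hC.exists_tendsto_of_forall_mem U
    (f := fun i ↦ K (u i)) fun i ↦ hKC ⟨u i, by simpa using hu i, rfl⟩
  suffices ψ = K φ from this ▸ hψ
  refine ext_inner_right 𝕜 fun y ↦ tendsto_nhds_unique (hψ.inner tendsto_const_nhds) ?_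
  simpa only [adjoint_inner_right] using (hφ (adjoint K y)).mono_left hU

end WeakLimits

lemma mul_sq_norm_le_norm_inner_map_self {𝕜 E : Type*} [RCLike 𝕜] [NormedAddCommGroup E]
    [InnerProductSpace 𝕜 E] {T : E →L[𝕜] E} {c : ℝ}
    (h : ∀ u : E, ‖u‖ = 1 → c ≤ ‖⟪u, T u⟫_𝕜‖) (x : E) :
    c * ‖x‖ ^ 2 ≤ ‖⟪x, T x⟫_𝕜‖ := by
  rcases eq_or_ne x 0 with rfl | hx
  · simp
  have hxpos : 0 < ‖x‖ := norm_pos_iff.mpr hx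
  have hscale : ‖⟪(‖x‖⁻¹ : 𝕜) • x, T ((‖x‖⁻¹ : 𝕜) • x)⟫_𝕜‖ = ‖⟪x, T x⟫_𝕜‖ / ‖x‖ ^ 2 := by
    simp only [map_smul, inner_smul_left, inner_smul_right, norm_mul, RCLike.norm_conj,
      norm_inv, RCLike.norm_ofReal, abs_norm]
    field_simp
  have := h _ (norm_smul_inv_norm (𝕜 := 𝕜) hx)
  rw [hscale, le_div_iff₀ (by positivity)] at this
  exact this

section Coercivity

variable {H : Type*} [NormedAddCommGroup H] [InnerProductSpace ℂ H] [CompleteSpace H]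

theorem exists_forall_mul_sq_le_norm_inner_of_isPositiveOp_add_compact {P K : H →L[ℂ] H}
    (hP : IsPositiveOp P) (hK : IsCompactOperator K)
    (hIm : ∀ φ : H, φ ≠ 0 → (⟪φ, (P + K) φ⟫).im ≠ 0) :
    ∃ c' > (0 : ℝ), ∀ φ : H, c' * ‖φ‖ ^ 2 ≤ ‖⟪φ, (P + K) φ⟫‖ := by
  obtain ⟨hsa, c, hc, hlow⟩ := hP
  by_contra hcoer
  have hsmall (n : ℕ) : ∃ u : H, ‖u‖ = 1 ∧ ‖⟪u, (P + K) u⟫‖ < 1 / (n + 1) := by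
    by_contra! h
    exact hcoer ⟨1 / (n + 1), by positivity, mul_sq_norm_le_norm_inner_map_self h⟩
  choose u hu_norm hu_lt using hsmall
  have hu_le (n : ℕ) : ‖u n‖ ≤ 1 := (hu_norm n).le
  have hq : Tendsto (fun n ↦ ⟪u n, (P + K) (u n)⟫) atTop (𝓝 0) :=
    squeeze_zero_norm (fun n ↦ (hu_lt n).le) tendsto_one_div_add_atTop_nhds_zero_nat
  let U : Ultrafilter ℕ := .of atTop
  obtain ⟨φ, hφ⟩ := exists_forall_tendsto_inner_of_norm_le (𝕜 := ℂ) U hu_le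
  have hKq : Tendsto (fun n ↦ ⟪u n, K (u n)⟫) U (𝓝 ⟪φ, K φ⟫) :=
    tendsto_inner_of_forall_tendsto_inner hu_le hφ (hK.tendsto_of_forall_tendsto_inner hu_le hφ)
  have hPq : Tendsto (fun n ↦ ⟪u n, P (u n)⟫) U (𝓝 (-⟪φ, K φ⟫)) := by
    simpa [inner_add_right] using (hq.mono_left (Ultrafilter.of_le _)).sub hKq
  have hlim : c ≤ (-⟪φ, K φ⟫).re ∧ (-⟪φ, K φ⟫).im = 0 := by
    refine ((isClosed_le continuous_const Complex.continuous_re).inter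
      (isClosed_eq Complex.continuous_im continuous_const)).mem_of_tendsto hPq
      (Eventually.of_forall fun n ↦ ⟨?_, hsa.isSymmetric.im_inner_self_apply _⟩)
    simpa [hu_norm n] using hlow (u n)
  have hφ_ne : φ ≠ 0 := by
    rintro rfl
    simp only [map_zero, inner_zero_right, neg_zero, Complex.zero_re] at hlim
    linarith
  refine hIm φ hφ_ne ?_
  have hPφ : (⟪φ, P φ⟫).im = 0 := hsa.isSymmetric.im_inner_self_apply φ
  simpa [inner_add_right, hPφ] using hlim.2

theorem exists_forall_mul_sq_le_norm_inner_of_isSignDefiniteOp_add_compact {P K : H →L[ℂ] H}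
    (hP : IsSignDefiniteOp P) (hK : IsCompactOperator K)
    (hIm : ∀ φ : H, φ ≠ 0 → (⟪φ, (P + K) φ⟫).im ≠ 0) :
    ∃ c' > (0 : ℝ), ∀ φ : H, c' * ‖φ‖ ^ 2 ≤ ‖⟪φ, (P + K) φ⟫‖ := by
  rcases hP with hP | hP
  · exact exists_forall_mul_sq_le_norm_inner_of_isPositiveOp_add_compact hP hK hIm
  · have hK' : IsCompactOperator ⇑(-K) := hK.neg
    have hIm' : ∀ φ : H, φ ≠ 0 → (⟪φ, (-P + -K) φ⟫).im ≠ 0 := by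
      simpa only [← neg_add, neg_apply, inner_neg_right, Complex.neg_im, ne_eq, neg_eq_zero]
        using hIm
    simpa only [← neg_add, neg_apply, inner_neg_right, norm_neg] using
      exists_forall_mul_sq_le_norm_inner_of_isPositiveOp_add_compact hP hK' hIm'

end Coercivity

/-- If `M = M₀ + K` with `M₀` sign-definite and `K` compact, and
`Im ⟪φ, M φ⟫ ≠ 0` for every `φ ≠ 0`, then `M` is coercive and bijective with
bounded inverse. -/
theorem signDefinite_plus_compact_coercive_invertible
    {H : Type*} [NormedAddCommGroup H] [InnerProductSpace ℂ H] [CompleteSpace H]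
    (M M₀ K : H →L[ℂ] H)
    (hsum : M = M₀ + K)
    (hsign : IsSignDefiniteOp M₀)
    (hK : IsCompactOperator (⇑K))
    (hIm : ∀ φ : H, φ ≠ 0 → (⟪φ, M φ⟫).im ≠ 0) :
    (∃ c' > (0 : ℝ), ∀ φ : H, c' * ‖φ‖ ^ 2 ≤ ‖⟪φ, M φ⟫‖) ∧
      Function.Bijective M ∧ ∃ Minv : H →L[ℂ] H, Minv ∘L M = 1 ∧ M ∘L Minv = 1 := by
  subst hsum
  obtain ⟨c, hc, hcoer⟩ :=
    exists_forall_mul_sq_le_norm_inner_of_isSignDefiniteOp_add_compact hsign hK hIm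
  have hunit : IsUnit (M₀ + K) :=
    isUnit_of_forall_le_norm_inner_map _ (c := ⟨c, hc.le⟩) hc fun x ↦ by
      rw [norm_inner_symm, mul_comm]
      exact hcoer x
  obtain ⟨Minv, hright, hleft⟩ := isUnit_iff_exists.mp hunit
  exact ⟨⟨c, hc, hcoer⟩, isUnit_iff_bijective.mp hunit, Minv, hleft, hright⟩
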